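/- arXiv:1204.5203 — 2 statements merged into one kernel-verified Lean document; each statement's English description precedes it below -/
import Mathlib

section
/- Let n ≥ 3 and let f : 𝔽₂ⁿ → 𝔽₂ be a nested canalizing function. Then the average sensitivity of f satisfies n/2^{n−1} ≤ s^f < 2 − 1/2^{n−2}. Moreover, the lower bound n/2^{n−1} is attained exactly by the nested canalizing functions with layer number 1. -/
/-!
Let `kᵢ` be the size of layer `i`, `Kᵢ = k₀ + ⋯ + kᵢ₋₁`, and let `wₗ` be the probability that the
function `gₗ = Mₗ(Mₗ₊₁(⋯) ⊕ 1)` built from the layers `l, l+1, …` equals `1`. Flipping a variable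
of layer `i` changes `f` exactly when every other variable of the layers `≤ i` makes its factor
equal to `1` and `gᵢ₊₁ = 0`; these events involve disjoint sets of variables, hence are
independent, and the activity is `2^{1-Kᵢ₊₁}(1 - wᵢ₊₁)`. The same independence gives
`wₗ = 2^{-kₗ}(1 - wₗ₊₁)` with `w_r = 0`, so `0 ≤ wₗ ≤ 1/2`.

Every variable outside the last layer then has activity `> 2^{1-n}` (as `Kᵢ₊₁ ≤ n - 2`), and every
variable of the last layer has activity exactly `2^{1-n}`: this is the lower bound with its
equality case. For the upper bound, `(k + 1) 2^{-k} ≤ 1` makes the half-sensitivity telescope to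
at most `1 - 2^{1-n}`, the last layer (`k ≥ 2`, `(k + 2) 2^{-k} ≤ 1`) producing the `2^{1-n}`;
strictness comes from `w₁ > 0` if `r ≥ 2`, and from `n + 2 < 2ⁿ` if `r = 1`.
-/

/-- `f` is nested canalizing in the variable order `σ(0), σ(1), …, σ(n-1)`
with canalizing input values `a` and canalized output values `b`:
`f x = b k` whenever `x (σ j) = a j + 1` for all `j < k` and `x (σ k) = a k`,
and `f x = b (last) + 1` whenever `x (σ j) = a j + 1` for all `j`. -/
def IsNCF {n : ℕ} (f : (Fin n → ZMod 2) → ZMod 2) (σ : Equiv.Perm (Fin n))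
    (a b : Fin n → ZMod 2) : Prop :=
  (∀ (k : Fin n) (x : Fin n → ZMod 2),
      (∀ j : Fin n, j < k → x (σ j) = a j + 1) → x (σ k) = a k → f x = b k) ∧
  (∀ k : Fin n, (∀ j : Fin n, j ≤ k) →
      ∀ x : Fin n → ZMod 2, (∀ j : Fin n, x (σ j) = a j + 1) → f x = b k + 1)

/-- The nested expression `M i * (M (i+1) * ( … * (M (i+t-1) + 1) … ) + 1)`
with `t` factors, i.e. `nestVal M t i = Mᵢ(M_{i+1}(⋯(M_{i+t-1} ⊕ 1)⋯) ⊕ 1)`. -/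
def nestVal (M : ℕ → ZMod 2) : ℕ → ℕ → ZMod 2
  | 0, _ => 0
  | 1, i => M i
  | (t + 2), i => M i * (nestVal M (t + 1) (i + 1) + 1)

/-- The extended monomial of the `i`-th layer, given the layer assignment `L`
and the complemented inputs `a`:  `Mᵢ(x) = ∏_{L j = i} (x j ⊕ a j)`. -/
def layerMon {n r : ℕ} (L : Fin n → Fin r) (a : Fin n → ZMod 2) (i : ℕ)
    (x : Fin n → ZMod 2) : ZMod 2 :=
  ∏ j ∈ Finset.univ.filter (fun j : Fin n => (L j : ℕ) = i), (x j + a j)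

/-- `kᵢ`, the number of variables in the `i`-th layer. -/
def layerSize {n r : ℕ} (L : Fin n → Fin r) (i : ℕ) : ℕ :=
  (Finset.univ.filter (fun j : Fin n => (L j : ℕ) = i)).card

/-- `K_l = k₀ + k₁ + ⋯ + k_{l-1}`, the number of variables in the first `l` layers. -/
def layerSum {n r : ℕ} (L : Fin n → Fin r) (l : ℕ) : ℕ :=
  ∑ i ∈ Finset.range l, layerSize L i

/-- `f` is given in the layered form
`f = M₁(M₂(⋯(M_{r−1}(M_r ⊕ 1) ⊕ 1)⋯) ⊕ 1) ⊕ b`, where the `Mᵢ` are extended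
monomials in pairwise disjoint sets of variables comprising all `n` variables
(the variable set of `Mᵢ` being the `i`-th layer `{j | L j = i}`), every layer
is nonempty, and the last layer has at least two variables. -/
def IsLayeredForm {n r : ℕ} (f : (Fin n → ZMod 2) → ZMod 2)
    (L : Fin n → Fin r) (a : Fin n → ZMod 2) (b : ZMod 2) : Prop :=
  1 ≤ r ∧
  (∀ i : Fin r, 1 ≤ layerSize L (i : ℕ)) ∧
  2 ≤ layerSize L (r - 1) ∧
  ∀ x : Fin n → ZMod 2, f x = nestVal (fun i => layerMon L a i x) r 0 + b

/-- The activity `λᵢᶠ = 2⁻ⁿ ∑_x (f(x with xᵢ flipped) ⊕ f(x))`, the Boolean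
difference being regarded as the integer 0 or 1. -/
def activity {n : ℕ} (f : (Fin n → ZMod 2) → ZMod 2) (i : Fin n) : ℚ :=
  (1 / 2 ^ n) * ∑ x : Fin n → ZMod 2,
    ((f (Function.update x i (x i + 1)) + f x).val : ℚ)

/-- The average sensitivity `sᶠ = ∑ᵢ λᵢᶠ`. -/
def avgSens {n : ℕ} (f : (Fin n → ZMod 2) → ZMod 2) : ℚ :=
  ∑ i : Fin n, activity f i

open Finset Function
open scoped BigOperators

theorem Fintype.expect_mul_of_dependsOn {ι : Type*} [Fintype ι] [DecidableEq ι] {α : ι → Type*}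
    [∀ i, Fintype (α i)] [∀ i, Nonempty (α i)] {K : Type*} [Semifield K] [CharZero K]
    {F G : (Π i, α i) → K} {s : Set ι} (hF : DependsOn F s) (hG : DependsOn G sᶜ) :
    𝔼 x, F x * G x = (𝔼 x, F x) * 𝔼 x, G x := by
  classical
  let glue : (Π i, α i) × (Π i, α i) → Π i, α i := fun z => s.piecewise z.1 z.2
  have hswap : Involutive fun z => (glue z, glue z.swap) := by
    intro z
    ext i <;> by_cases hi : i ∈ s <;> simp [glue, hi]
  have hglue : ∀ z, glue (glue z, glue z.swap) = z.1 := fun z => congrArg Prod.fst (hswap z)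
  calc 𝔼 x, F x * G x = 𝔼 z : (Π i, α i) × (Π i, α i), F z.1 * G z.1 := by
        rw [← Finset.univ_product_univ, Finset.expect_product' univ univ (fun x _ => F x * G x)]
        simp
    _ = 𝔼 z : (Π i, α i) × (Π i, α i), F (glue z) * G (glue z) :=
        Fintype.expect_equiv (hswap.toPerm _) _ _ fun z => by simp [hglue]
    _ = 𝔼 z : (Π i, α i) × (Π i, α i), F z.1 * G z.2 := by
        refine Finset.expect_congr rfl fun z _ => ?_
        congr 1
        · exact hF fun i hi => Set.piecewise_eq_of_mem _ _ _ hi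
        · exact hG fun i hi => Set.piecewise_eq_of_notMem _ _ _ hi
    _ = (𝔼 x, F x) * 𝔼 x, G x := by
        rw [Finset.expect_mul_expect, ← Finset.expect_product', Finset.univ_product_univ]

namespace ZMod

theorem cast_val_mul_two {R : Type*} [CommRing R] (p q : ZMod 2) :
    ((p * q).val : R) = p.val * q.val := by
  have : (p * q).val = p.val * q.val := by fin_cases p <;> fin_cases q <;> rfl
  rw [this, Nat.cast_mul]

theorem cast_val_add_one_two {R : Type*} [CommRing R] (p : ZMod 2) :
    ((p + 1).val : R) = 1 - p.val := by
  have : (p + 1).val + p.val = 1 := by fin_cases p <;> rfl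
  rw [eq_sub_iff_add_eq, ← Nat.cast_add, this, Nat.cast_one]

theorem cast_val_prod_two {R ι : Type*} [CommRing R] (S : Finset ι) (c : ι → ZMod 2) :
    ((∏ j ∈ S, c j).val : R) = ∏ j ∈ S, ((c j).val : R) := by
  induction S using Finset.cons_induction with
  | empty => rw [prod_empty, prod_empty, ZMod.val_one, Nat.cast_one]
  | cons j S hj ih => rw [prod_cons, prod_cons, cast_val_mul_two, ih]

end ZMod

section BooleanCube

variable {ι : Type*} [Fintype ι] [DecidableEq ι]

theorem expect_val_add_apply (j : ι) (c : ZMod 2) :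
    𝔼 x : ι → ZMod 2, ((x j + c).val : ℚ) = 1 / 2 := by
  have hflip : 𝔼 x : ι → ZMod 2, ((x j + c).val : ℚ) = 𝔼 x : ι → ZMod 2, ((x j + c + 1).val : ℚ) :=
    (Fintype.expect_equiv (Equiv.addRight (Pi.single j 1)) _ _ fun x => by
      simp only [Equiv.coe_addRight, Pi.add_apply, Pi.single_eq_same, add_right_comm]).symm
  have hpair : 𝔼 x : ι → ZMod 2, ((x j + c).val : ℚ)
      + 𝔼 x : ι → ZMod 2, ((x j + c + 1).val : ℚ) = 1 := by
    simp_rw [← expect_add_distrib, ZMod.cast_val_add_one_two, add_sub_cancel]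
    exact Fintype.expect_one
  linarith

theorem expect_prod_val_add (a : ι → ZMod 2) (S : Finset ι) :
    𝔼 x : ι → ZMod 2, ∏ j ∈ S, ((x j + a j).val : ℚ) = (1 / 2) ^ #S := by
  induction S using Finset.induction_on with
  | empty => simp
  | insert j S hj ih =>
    simp_rw [prod_insert hj]
    rw [Fintype.expect_mul_of_dependsOn (s := {j}), expect_val_add_apply, ih,
      card_insert_of_notMem hj, pow_succ']
    · exact fun x y h => by rw [h j rfl]
    · exact fun x y h => prod_congr rfl fun i hi => by
        rw [h i (by simpa using ne_of_mem_of_not_mem hi hj)]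

end BooleanCube

theorem activity_eq_expect {n : ℕ} (f : (Fin n → ZMod 2) → ZMod 2) (i : Fin n) :
    activity f i = 𝔼 x, ((f (update x i (x i + 1)) + f x).val : ℚ) := by
  rw [activity, Fintype.expect_eq_sum_div_card, Fintype.card_pi]
  simp [div_eq_inv_mul]

theorem nestVal_succ (M : ℕ → ZMod 2) (t i : ℕ) :
    nestVal M (t + 1) i = M i * (nestVal M t (i + 1) + 1) := by
  cases t with
  | zero => rw [nestVal, nestVal, zero_add, mul_one]
  | succ t => rfl

theorem nestVal_congr {M M' : ℕ → ZMod 2} {l : ℕ} (h : ∀ i, l ≤ i → M i = M' i) (t : ℕ) :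
    nestVal M t l = nestVal M' t l := by
  induction t generalizing l with
  | zero => rfl
  | succ t ih => rw [nestVal_succ, nestVal_succ, h l le_rfl, ih fun i hi => h i (by omega)]

theorem nestVal_add_nestVal_of_ne {M M' : ℕ → ZMod 2} {i : ℕ} (h : ∀ m, m ≠ i → M' m = M m)
    {t l : ℕ} (hli : l ≤ i) (hit : i < l + t) :
    nestVal M' t l + nestVal M t l
      = (∏ m ∈ Ico l i, M m) * (M' i + M i) * (nestVal M (l + t - (i + 1)) (i + 1) + 1) := by
  induction t generalizing l with
  | zero => omega
  | succ t ih =>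
    rw [nestVal_succ, nestVal_succ]
    rcases hli.eq_or_lt with rfl | hlt
    · rw [nestVal_congr (fun m hm => h m (by omega)) t, Ico_self, prod_empty,
        show l + (t + 1) - (l + 1) = t by omega]
      ring
    · have h2 : (2 : ZMod 2) = 0 := rfl
      rw [h l hlt.ne, prod_eq_prod_Ico_succ_bot hlt, show l + (t + 1) = l + 1 + t by omega,
        mul_assoc (M l), mul_assoc (M l), ← ih hlt (by omega)]
      linear_combination M l * h2

theorem succ_mul_half_pow_le_one (k : ℕ) : ((k : ℚ) + 1) * (1 / 2) ^ k ≤ 1 := by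
  rw [one_div_pow, mul_one_div, div_le_one (by positivity)]
  exact_mod_cast Nat.lt_two_pow_self

theorem Nat.add_two_le_two_pow {k : ℕ} (hk : 2 ≤ k) : k + 2 ≤ 2 ^ k := by
  induction k, hk using Nat.le_induction with
  | base => norm_num
  | succ k _ ih => rw [pow_succ]; omega

theorem add_two_mul_half_pow_le_one {k : ℕ} (hk : 2 ≤ k) : ((k : ℚ) + 2) * (1 / 2) ^ k ≤ 1 := by
  rw [one_div_pow, mul_one_div, div_le_one (by positivity)]
  exact_mod_cast Nat.add_two_le_two_pow hk

theorem add_two_mul_half_pow_lt_one {k : ℕ} (hk : 3 ≤ k) : ((k : ℚ) + 2) * (1 / 2) ^ k < 1 := by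
  obtain ⟨j, rfl⟩ : ∃ j, k = j + 1 := ⟨k - 1, by omega⟩
  have := Nat.add_two_le_two_pow (k := j) (by omega)
  rw [one_div_pow, mul_one_div, div_lt_one (by positivity), pow_succ]
  exact_mod_cast (by omega : j + 1 + 2 < 2 ^ j * 2)

section Layers

variable {n r : ℕ} (L : Fin n → Fin r) (a : Fin n → ZMod 2)

theorem dependsOn_layerMon (i : ℕ) : DependsOn (layerMon L a i) {j | L j = i} :=
  fun x y h => prod_congr rfl fun j hj => by rw [h j (by simpa using hj)]

theorem dependsOn_nestVal_layerMon (t l : ℕ) :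
    DependsOn (fun x => nestVal (fun i => layerMon L a i x) t l) {j | l ≤ L j} :=
  fun x y h => nestVal_congr (fun i hi => dependsOn_layerMon L a i fun j hj => h j <| by
    simp only [Set.mem_ofPred_eq] at hj ⊢; omega) t

theorem prod_range_layerMon (i : ℕ) (x : Fin n → ZMod 2) :
    ∏ m ∈ range i, layerMon L a m x = ∏ j with (L j : ℕ) < i, (x j + a j) := by
  rw [← prod_fiberwise_of_maps_to (g := fun j => (L j : ℕ)) (t := range i)
    (fun j hj => by simpa using hj)]
  refine prod_congr rfl fun m hm => ?_
  rw [layerMon, filter_filter]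
  congr 1
  ext j
  simp only [mem_filter, mem_univ, true_and, mem_range] at hm ⊢
  omega

theorem card_filter_lt_layer (i : ℕ) : #{j | (L j : ℕ) < i} = layerSum L i := by
  rw [layerSum, card_eq_sum_card_fiberwise (f := fun j => (L j : ℕ)) (t := range i)
    (fun j hj => by simpa using hj)]
  refine sum_congr rfl fun m hm => ?_
  rw [layerSize, filter_filter]
  congr 1
  ext j
  simp only [mem_filter, mem_univ, true_and, mem_range] at hm ⊢
  omega

theorem layerSum_succ (i : ℕ) : layerSum L (i + 1) = layerSum L i + layerSize L i :=
  sum_range_succ _ _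

theorem layerSum_self : layerSum L r = n := by
  rw [← card_filter_lt_layer, filter_true_of_mem fun j _ => (L j).isLt, card_univ,
    Fintype.card_fin]

theorem expect_layerMon (i : ℕ) :
    𝔼 x, ((layerMon L a i x).val : ℚ) = (1 / 2) ^ layerSize L i := by
  simp_rw [layerMon, ZMod.cast_val_prod_two]
  exact expect_prod_val_add a _

theorem layerMon_update_add {v : Fin n} {i : ℕ} (hvi : L v = i) (x : Fin n → ZMod 2) :
    layerMon L a i (update x v (x v + 1)) + layerMon L a i x
      = ∏ j ∈ ({j | L j = i} : Finset (Fin n)).erase v, (x j + a j) := by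
  have hv : v ∈ ({j | L j = i} : Finset (Fin n)) := by simpa using hvi
  have hflip : ∀ p c P : ZMod 2, (p + 1 + c) * P + (p + c) * P = P := by decide
  rw [layerMon, layerMon, ← mul_prod_erase _ _ hv, ← mul_prod_erase _ _ hv, update_self,
    prod_congr rfl fun j hj => by rw [update_of_ne (ne_of_mem_erase hj)]]
  exact hflip _ _ _

def layerMean (l : ℕ) : ℚ :=
  𝔼 x, ((nestVal (fun i => layerMon L a i x) (r - l) l).val : ℚ)

theorem layerMean_self : layerMean L a r = 0 := by
  simp [layerMean, nestVal]

theorem dependsOn_one_sub_val_nestVal_layerMon (t l : ℕ) :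
    DependsOn (fun x => 1 - ((nestVal (fun i => layerMon L a i x) t l).val : ℚ)) {j | l ≤ L j} :=
  fun _ _ h => congrArg (fun z : ZMod 2 => 1 - (z.val : ℚ)) (dependsOn_nestVal_layerMon L a t l h)

theorem layerMean_of_lt {l : ℕ} (hl : l < r) :
    layerMean L a l = (1 / 2) ^ layerSize L l * (1 - layerMean L a (l + 1)) := by
  have hval : ∀ x, ((nestVal (fun i => layerMon L a i x) (r - l) l).val : ℚ)
      = (layerMon L a l x).val
        * (1 - (nestVal (fun i => layerMon L a i x) (r - (l + 1)) (l + 1)).val) := fun x => by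
    rw [show r - l = r - (l + 1) + 1 by omega, nestVal_succ, ZMod.cast_val_mul_two,
      ZMod.cast_val_add_one_two]
  have hdep := (dependsOn_one_sub_val_nestVal_layerMon L a (r - (l + 1)) (l + 1)).mono
    (t := {j | L j = l}ᶜ) fun j hj => by
      simp only [Set.mem_compl_iff, Set.mem_ofPred_eq] at hj ⊢; omega
  rw [layerMean, Finset.expect_congr rfl fun x _ => hval x,
    Fintype.expect_mul_of_dependsOn (fun x y h => by rw [dependsOn_layerMon L a l h]) hdep,
    expect_layerMon, expect_sub_distrib, Fintype.expect_one, layerMean]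

theorem update_add_eq_of_layered {f : (Fin n → ZMod 2) → ZMod 2} {b : ZMod 2}
    (hform : ∀ x, f x = nestVal (fun i => layerMon L a i x) r 0 + b) {v : Fin n} {i : ℕ}
    (hvi : L v = i) (x : Fin n → ZMod 2) :
    f (update x v (x v + 1)) + f x
      = (∏ j with (L j : ℕ) < i, (x j + a j))
        * (∏ j ∈ ({j | L j = i} : Finset (Fin n)).erase v, (x j + a j))
        * (nestVal (fun m => layerMon L a m x) (r - (i + 1)) (i + 1) + 1) := by
  have hoff : ∀ m, m ≠ i → layerMon L a m (update x v (x v + 1)) = layerMon L a m x :=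
    fun m hm => dependsOn_layerMon L a m fun j hj =>
      update_of_ne (by rintro rfl; exact hm (hj.symm.trans hvi)) _ _
  rw [hform, hform, add_add_add_comm, CharTwo.add_self_eq_zero, add_zero,
    nestVal_add_nestVal_of_ne hoff (Nat.zero_le i) (by omega), layerMon_update_add L a hvi,
    ← range_eq_Ico, prod_range_layerMon, zero_add]

theorem activity_eq_of_layered {f : (Fin n → ZMod 2) → ZMod 2} {b : ZMod 2}
    (hform : ∀ x, f x = nestVal (fun i => layerMon L a i x) r 0 + b) (v : Fin n) :
    activity f v = 2 * (1 / 2) ^ layerSum L (L v + 1) * (1 - layerMean L a (L v + 1)) := by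
  obtain ⟨i, hvi⟩ : ∃ i : ℕ, L v = i := ⟨_, rfl⟩
  rw [hvi]
  have hv : v ∈ ({j | L j = i} : Finset (Fin n)) := by simpa using hvi
  set T : Finset (Fin n) :=
    ({j | (L j : ℕ) < i} : Finset (Fin n)) ∪ ({j | L j = i} : Finset (Fin n)).erase v
  have hdisj : Disjoint ({j | (L j : ℕ) < i} : Finset (Fin n))
      (({j | L j = i} : Finset (Fin n)).erase v) :=
    disjoint_left.2 fun j h1 h2 => by simp only [mem_filter, mem_erase] at h1 h2; omega
  have hderiv : ∀ x, ((f (update x v (x v + 1)) + f x).val : ℚ)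
      = (∏ j ∈ T, ((x j + a j).val : ℚ))
        * (1 - (nestVal (fun m => layerMon L a m x) (r - (i + 1)) (i + 1)).val) := fun x => by
    rw [update_add_eq_of_layered L a hform hvi, ZMod.cast_val_mul_two, ZMod.cast_val_mul_two,
      ZMod.cast_val_add_one_two, ZMod.cast_val_prod_two, ZMod.cast_val_prod_two,
      prod_union hdisj]
  have hdep := (dependsOn_one_sub_val_nestVal_layerMon L a (r - (i + 1)) (i + 1)).mono
    (t := (↑T)ᶜ) fun j hj => by
      simp only [Set.mem_ofPred_eq] at hj
      simp only [Set.mem_compl_iff, mem_coe, T, mem_union, mem_filter, mem_erase, mem_univ,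
        true_and]
      rintro (h | ⟨-, h⟩) <;> omega
  have hcard : #T + 1 = layerSum L (i + 1) := by
    have hpos : 0 < layerSize L i := card_pos.2 ⟨v, hv⟩
    rw [card_union_of_disjoint hdisj, card_erase_of_mem hv, card_filter_lt_layer, layerSum_succ]
    rw [layerSize] at hpos ⊢
    omega
  rw [activity_eq_expect, Finset.expect_congr rfl fun x _ => hderiv x,
    Fintype.expect_mul_of_dependsOn (fun x y h => prod_congr rfl fun j hj => by rw [h j hj])
      hdep, expect_prod_val_add, expect_sub_distrib, Fintype.expect_one, ← hcard, layerMean,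
    pow_succ]
  ring

def layerSens : ℚ :=
  ∑ m ∈ range r,
    (layerSize L m : ℚ) * (2 * (1 / 2) ^ layerSum L (m + 1) * (1 - layerMean L a (m + 1)))

theorem avgSens_eq_layerSens {f : (Fin n → ZMod 2) → ZMod 2} {b : ZMod 2}
    (hform : ∀ x, f x = nestVal (fun i => layerMon L a i x) r 0 + b) :
    avgSens f = layerSens L a := by
  simp_rw [avgSens, activity_eq_of_layered L a hform]
  rw [← sum_fiberwise_of_maps_to (g := fun v => (L v : ℕ)) (t := range r)
    (fun v _ => mem_range.2 (L v).isLt)]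
  refine sum_congr rfl fun m _ => ?_
  rw [sum_congr rfl fun v hv => by rw [(mem_filter.1 hv).2], sum_const, nsmul_eq_mul, layerSize]

theorem layerMean_mem_Icc (hk : ∀ i : Fin r, 1 ≤ layerSize L i) {l : ℕ} (hl : l ≤ r) :
    layerMean L a l ∈ Set.Icc 0 (1 / 2) := by
  induction hl using Nat.decreasingInduction with
  | self => simp [layerMean_self]
  | of_succ l hl ih =>
    obtain ⟨hw0, hw1⟩ := ih
    have hp : (1 / 2 : ℚ) ^ layerSize L l ≤ 1 / 2 := by
      simpa using pow_le_pow_of_le_one (by norm_num : (0 : ℚ) ≤ 1 / 2) (by norm_num) (hk ⟨l, hl⟩)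
    rw [layerMean_of_lt L a hl]
    constructor <;> nlinarith [pow_pos (by norm_num : (0 : ℚ) < 1 / 2) (layerSize L l)]

theorem layerMean_pos (hk : ∀ i : Fin r, 1 ≤ layerSize L i) {l : ℕ} (hl : l < r) :
    0 < layerMean L a l := by
  rw [layerMean_of_lt L a hl]
  have := (layerMean_mem_Icc L a hk hl).2
  have : (0 : ℚ) < (1 / 2) ^ layerSize L l := by positivity
  nlinarith

theorem layerSum_add_two_le (hlast : 2 ≤ layerSize L (r - 1)) {m : ℕ} (hm : m < r) :
    layerSum L m + 2 ≤ n := by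
  have hmono : layerSum L m ≤ layerSum L (r - 1) :=
    sum_le_sum_of_subset (range_subset_range.2 (by omega))
  have := layerSum_succ L (r - 1)
  rw [Nat.sub_add_cancel (by omega), layerSum_self] at this
  omega

theorem half_pow_lt_layerMean_term (hk : ∀ i : Fin r, 1 ≤ layerSize L i)
    (hlast : 2 ≤ layerSize L (r - 1)) {m : ℕ} (hm : m < r) :
    (1 / 2 : ℚ) ^ n < (1 / 2) ^ layerSum L m * (1 - layerMean L a m) := by
  have hK := layerSum_add_two_le L hlast hm
  have hw := (layerMean_mem_Icc L a hk hm.le).2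
  have hpow : (1 / 2 : ℚ) ^ n ≤ (1 / 2) ^ layerSum L m / 4 := by
    calc (1 / 2 : ℚ) ^ n ≤ (1 / 2) ^ (layerSum L m + 2) :=
          pow_le_pow_of_le_one (by norm_num) (by norm_num) hK
      _ = (1 / 2) ^ layerSum L m / 4 := by rw [pow_add]; ring
  nlinarith [pow_pos (by norm_num : (0 : ℚ) < 1 / 2) n]

theorem layerSens_of_eq_one (hr : r = 1) : layerSens L a = 2 * n * (1 / 2) ^ n := by
  subst hr
  have hK : layerSum L 1 = n := layerSum_self L
  have hk : layerSize L 0 = n := by simpa [layerSum] using hK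
  rw [layerSens, sum_range_one, hK, hk, layerMean_self]
  ring

theorem lt_layerSens (hk : ∀ i : Fin r, 1 ≤ layerSize L i) (hlast : 2 ≤ layerSize L (r - 1))
    (hr : 2 ≤ r) : 2 * n * (1 / 2 : ℚ) ^ n < layerSens L a := by
  have hterm_le : ∀ m ∈ range r,
      (layerSize L m : ℚ) * (2 * (1 / 2) ^ n) ≤
        layerSize L m * (2 * (1 / 2) ^ layerSum L (m + 1) * (1 - layerMean L a (m + 1))) := by
    intro m hm
    rw [mem_range] at hm
    rcases (show m + 1 ≤ r by omega).eq_or_lt with hmr | hmr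
    · rw [hmr, layerSum_self, layerMean_self, sub_zero, mul_one]
    · have := half_pow_lt_layerMean_term L a hk hlast hmr
      exact mul_le_mul_of_nonneg_left (by linarith) (Nat.cast_nonneg _)
  have hterm_lt : (layerSize L 0 : ℚ) * (2 * (1 / 2) ^ n) <
      layerSize L 0 * (2 * (1 / 2) ^ layerSum L 1 * (1 - layerMean L a 1)) := by
    have := half_pow_lt_layerMean_term L a hk hlast (m := 1) (by omega)
    exact mul_lt_mul_of_pos_left (by linarith) (by exact_mod_cast hk ⟨0, by omega⟩)
  calc 2 * n * (1 / 2 : ℚ) ^ n = ∑ m ∈ range r, (layerSize L m : ℚ) * (2 * (1 / 2) ^ n) := by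
        rw [← sum_mul, ← Nat.cast_sum, ← layerSum, layerSum_self]
        ring
    _ < layerSens L a := sum_lt_sum hterm_le ⟨0, mem_range.2 (by omega), hterm_lt⟩

theorem layerSens_tail_le (hk : ∀ i : Fin r, 1 ≤ layerSize L i) (hlast : 2 ≤ layerSize L (r - 1))
    {l : ℕ} (hl : l < r) :
    ∑ m ∈ Ico l r,
        (layerSize L m : ℚ) * ((1 / 2) ^ layerSum L (m + 1) * (1 - layerMean L a (m + 1)))
        + layerSize L l * ((1 / 2) ^ layerSum L (l + 1) * layerMean L a (l + 1))
      ≤ (1 / 2) ^ layerSum L l - 2 * (1 / 2) ^ n := by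
  have hu : ∀ m, (1 / 2 : ℚ) ^ layerSum L (m + 1)
      = (1 / 2) ^ layerSum L m * (1 / 2) ^ layerSize L m := fun m => by
    rw [layerSum_succ, pow_add]
  induction Nat.le_sub_one_of_lt hl using Nat.decreasingInduction with
  | self =>
    have hr : r - 1 + 1 = r := by omega
    have hn : (1 / 2 : ℚ) ^ n = (1 / 2) ^ layerSum L (r - 1) * (1 / 2) ^ layerSize L (r - 1) := by
      rw [← hu, hr, layerSum_self]
    rw [Nat.Ico_pred_singleton (by omega), sum_singleton, hr, layerMean_self, layerSum_self, hn]
    have := mul_le_mul_of_nonneg_left (add_two_mul_half_pow_le_one hlast)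
      (pow_nonneg (by norm_num : (0 : ℚ) ≤ 1 / 2) (layerSum L (r - 1)))
    linarith
  | of_succ l hl ih =>
    have hw := (layerMean_mem_Icc L a hk (show l + 1 + 1 ≤ r by omega)).1
    have hc : 0 ≤ (layerSize L (l + 1) : ℚ)
        * ((1 / 2) ^ layerSum L (l + 1 + 1) * layerMean L a (l + 1 + 1)) := by
      positivity
    have hdecay :
        ((layerSize L l : ℚ) + 1) * (1 / 2) ^ layerSum L (l + 1) ≤ (1 / 2) ^ layerSum L l := by
      have := mul_le_mul_of_nonneg_left (succ_mul_half_pow_le_one (layerSize L l))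
        (pow_nonneg (by norm_num : (0 : ℚ) ≤ 1 / 2) (layerSum L l))
      rw [hu]
      linarith
    rw [sum_eq_sum_Ico_succ_bot (by omega : l < r)]
    linarith [ih (by omega)]

theorem layerSens_lt (hn : 3 ≤ n) (hr : 1 ≤ r) (hk : ∀ i : Fin r, 1 ≤ layerSize L i)
    (hlast : 2 ≤ layerSize L (r - 1)) : layerSens L a < 2 - 4 * (1 / 2) ^ n := by
  rcases hr.eq_or_lt with hr | hr
  · rw [layerSens_of_eq_one L a hr.symm]
    linarith [add_two_mul_half_pow_lt_one hn]
  · have htail := layerSens_tail_le L a hk hlast (l := 0) (by omega)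
    rw [show layerSum L 0 = 0 from sum_range_zero _, pow_zero] at htail
    have hpos : 0 < (layerSize L 0 : ℚ) * ((1 / 2) ^ layerSum L 1 * layerMean L a 1) :=
      mul_pos (by exact_mod_cast hk ⟨0, by omega⟩)
        (mul_pos (by positivity) (layerMean_pos L a hk hr))
    have hS : layerSens L a = 2 * ∑ m ∈ Ico 0 r,
        (layerSize L m : ℚ) * ((1 / 2) ^ layerSum L (m + 1) * (1 - layerMean L a (m + 1))) := by
      rw [layerSens, ← range_eq_Ico, mul_sum]
      exact sum_congr rfl fun m _ => by ring
    linarith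

end Layers

/-- For `n ≥ 3` and `f` nested canalizing, the average sensitivity satisfies
`n/2^{n−1} ≤ sᶠ < 2 − 1/2^{n−2}`, and the lower bound is attained exactly by
the nested canalizing functions with layer number 1. -/
theorem statement16 {n : ℕ} (hn : 3 ≤ n) (f : (Fin n → ZMod 2) → ZMod 2)
    (hf : ∃ (r : ℕ) (L : Fin n → Fin r) (a : Fin n → ZMod 2) (b : ZMod 2),
      IsLayeredForm f L a b) :
    ((n : ℚ) / 2 ^ (n - 1) ≤ avgSens f ∧ avgSens f < 2 - 1 / 2 ^ (n - 2)) ∧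
    (avgSens f = (n : ℚ) / 2 ^ (n - 1) ↔
      ∃ (L : Fin n → Fin 1) (a : Fin n → ZMod 2) (b : ZMod 2),
        IsLayeredForm f L a b) := by
  obtain ⟨r, L, a, b, hr, hk, hlast, hform⟩ := hf
  have hlower : (n : ℚ) / 2 ^ (n - 1) = 2 * n * (1 / 2) ^ n := by
    have h : (2 : ℚ) ^ n = 2 ^ (n - 1) * 2 := by rw [← pow_succ, Nat.sub_add_cancel (by omega)]
    rw [one_div_pow, h]
    field_simp
  have hupper : (2 : ℚ) - 1 / 2 ^ (n - 2) = 2 - 4 * (1 / 2) ^ n := by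
    have h : (2 : ℚ) ^ n = 2 ^ (n - 2) * 4 := by
      rw [show (4 : ℚ) = 2 ^ 2 by norm_num, ← pow_add, Nat.sub_add_cancel (by omega)]
    rw [one_div_pow, h]
    field_simp
  rw [hlower, hupper, avgSens_eq_layerSens L a hform]
  refine ⟨⟨?_, layerSens_lt L a hn hr hk hlast⟩, fun h => ?_, ?_⟩
  · rcases hr.eq_or_lt with hr | hr
    · exact (layerSens_of_eq_one L a hr.symm).ge
    · exact (lt_layerSens L a hk hlast hr).le
  · obtain rfl : r = 1 := by
      by_contra hne
      exact (lt_layerSens L a hk hlast (by omega)).ne' h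
    exact ⟨L, a, b, hr, hk, hlast, hform⟩
  · rintro ⟨L', a', b', -, -, -, hform'⟩
    rw [← avgSens_eq_layerSens L a hform, avgSens_eq_layerSens L' a' hform',
      layerSens_of_eq_one L' a' rfl]
end

section
/- Let n ≥ 3 and let f : 𝔽₂ⁿ → 𝔽₂ be a nested canalizing function whose layered form has layer number r = n−1 with layer sizes k₁ = ⋯ = k_{n−2} = 1 and k_{n−1} = 2. Then the average sensitivity of f equals s^f = 4/3 − (3 + (−1)ⁿ)/(3 · 2ⁿ). -/
open Finset

lemma ZMod.val_add_one_eq_one_sub (c : ZMod 2) : ((c + 1).val : ℚ) = 1 - c.val := by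
  have h : (c + 1).val + c.val = 1 := by fin_cases c <;> rfl
  rw [eq_sub_iff_add_eq]
  exact_mod_cast h

lemma Fin.sum_pi_succ {α β : Type*} [Fintype α] [AddCommMonoid β] {n : ℕ}
    (F : (Fin (n + 1) → α) → β) : ∑ y, F y = ∑ c, ∑ t, F (Fin.cons c t) := by
  rw [← (Fin.consEquiv fun _ => α).sum_comp, Fintype.sum_prod_type]
  rfl

section Activity

variable {n : ℕ} (g : (Fin n → ZMod 2) → ZMod 2)

lemma activity_add_const (b : ZMod 2) (i : Fin n) :
    activity (fun x => g x + b) i = activity g i := by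
  have hb : ∀ u v : ZMod 2, u + b + (v + b) = u + v := by revert b; decide
  simp only [activity, hb]

lemma activity_comp_add (d : Fin n → ZMod 2) (i : Fin n) :
    activity (fun x => g (x + d)) i = activity g i := by
  have hupd : ∀ x : Fin n → ZMod 2,
      Function.update x i (x i + 1) + d = Function.update (x + d) i ((x + d) i + 1) := by
    intro x
    funext j
    by_cases hj : j = i
    · subst hj
      simp only [Pi.add_apply, Function.update_self]
      ring
    · simp [Function.update_of_ne hj]
  unfold activity
  congr 1
  exact Fintype.sum_equiv (Equiv.addRight d) _ _ fun x => by simp only [Equiv.coe_addRight, hupd]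

lemma activity_comp_perm (e : Equiv.Perm (Fin n)) (i : Fin n) :
    activity (fun x => g (x ∘ e)) i = activity g (e.symm i) := by
  unfold activity
  congr 1
  refine Fintype.sum_equiv (e.symm.arrowCongr (Equiv.refl _)) _ _ fun x => ?_
  change _ = ((g (Function.update (x ∘ e) _ _) + g (x ∘ e)).val : ℚ)
  simp [Function.update_comp_equiv]

lemma avgSens_add_const (b : ZMod 2) : avgSens (fun x => g x + b) = avgSens g := by
  simp only [avgSens, activity_add_const]

lemma avgSens_comp_add (d : Fin n → ZMod 2) : avgSens (fun x => g (x + d)) = avgSens g := by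
  simp only [avgSens, activity_comp_add]

lemma avgSens_comp_perm (e : Equiv.Perm (Fin n)) : avgSens (fun x => g (x ∘ e)) = avgSens g := by
  simp only [avgSens, activity_comp_perm]
  exact e.symm.sum_comp (activity g)

end Activity

lemma ZMod.sum_univ_two {β : Type*} [AddCommMonoid β] (F : ZMod 2 → β) :
    ∑ c, F c = F 0 + F 1 :=
  Fin.sum_univ_two F

def weight {n : ℕ} (g : (Fin n → ZMod 2) → ZMod 2) : ℚ :=
  ∑ x, ((g x).val : ℚ)

def prependCanalizing {n : ℕ} (g : (Fin n → ZMod 2) → ZMod 2) :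
    (Fin (n + 1) → ZMod 2) → ZMod 2 :=
  fun y => y 0 * (g (Fin.tail y) + 1)

section PrependCanalizing

variable {n : ℕ} (g : (Fin n → ZMod 2) → ZMod 2)

lemma sum_comp_tail (F : (Fin n → ZMod 2) → ℚ) :
    ∑ y : Fin (n + 1) → ZMod 2, F (Fin.tail y) = 2 * ∑ t, F t := by
  simp only [Fin.sum_pi_succ, Fin.tail_cons, ZMod.sum_univ_two]
  ring

lemma sum_val_head_mul (h : (Fin n → ZMod 2) → ZMod 2) :
    ∑ y : Fin (n + 1) → ZMod 2, ((y 0 * h (Fin.tail y)).val : ℚ) = ∑ t, ((h t).val : ℚ) := by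
  simp only [Fin.sum_pi_succ, Fin.cons_zero, Fin.tail_cons, ZMod.sum_univ_two, zero_mul,
    one_mul, ZMod.val_zero, Nat.cast_zero, Finset.sum_const_zero, zero_add]

lemma sum_val_add_one : ∑ t, ((g t + 1).val : ℚ) = 2 ^ n - weight g := by
  simp only [ZMod.val_add_one_eq_one_sub, Finset.sum_sub_distrib, weight, Finset.sum_const,
    Finset.card_univ, Fintype.card_fun, ZMod.card, Fintype.card_fin, nsmul_eq_mul, mul_one]
  push_cast
  ring

lemma weight_prependCanalizing : weight (prependCanalizing g) = 2 ^ n - weight g := by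
  rw [← sum_val_add_one]
  exact sum_val_head_mul (fun t => g t + 1)

lemma activity_prependCanalizing_zero :
    activity (prependCanalizing g) 0 = 1 - weight g / 2 ^ n := by
  have hflip : ∀ y : Fin (n + 1) → ZMod 2,
      prependCanalizing g (Function.update y 0 (y 0 + 1)) + prependCanalizing g y =
        g (Fin.tail y) + 1 := by
    intro y
    have h : ∀ c u : ZMod 2, (c + 1) * (u + 1) + c * (u + 1) = u + 1 := by decide
    simp only [prependCanalizing, Function.update_self, Fin.tail_update_zero, h]
  simp only [activity, hflip]
  rw [sum_comp_tail (fun t => ((g t + 1).val : ℚ)), sum_val_add_one]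
  field_simp
  ring

lemma activity_prependCanalizing_succ (i : Fin n) :
    activity (prependCanalizing g) i.succ = activity g i / 2 := by
  have hfactor : ∀ y : Fin (n + 1) → ZMod 2,
      prependCanalizing g (Function.update y i.succ (y i.succ + 1)) + prependCanalizing g y =
        y 0 * (g (Function.update (Fin.tail y) i (Fin.tail y i + 1)) + g (Fin.tail y)) := by
    intro y
    have h : ∀ c u v : ZMod 2, c * (u + 1) + c * (v + 1) = c * (u + v) := by decide
    simp only [prependCanalizing, Function.update_of_ne (Fin.succ_ne_zero i).symm,
      Fin.tail_update_succ, h]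
    rfl
  simp only [activity, hfactor]
  rw [sum_val_head_mul (fun t => g (Function.update t i (t i + 1)) + g t)]
  field_simp
  ring

lemma avgSens_prependCanalizing :
    avgSens (prependCanalizing g) = avgSens g / 2 + 1 - weight g / 2 ^ n := by
  rw [avgSens, Fin.sum_univ_succ, activity_prependCanalizing_zero]
  simp only [activity_prependCanalizing_succ, ← Finset.sum_div, avgSens]
  ring

end PrependCanalizing

def chainFun : (m : ℕ) → (Fin (m + 2) → ZMod 2) → ZMod 2
  | 0 => fun y => y 0 * y 1
  | m + 1 => prependCanalizing (chainFun m)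

lemma weight_chainFun (m : ℕ) : weight (chainFun m) = (2 ^ (m + 2) - (-1 : ℚ) ^ m) / 3 := by
  induction m with
  | zero =>
    rw [weight, ← Nat.cast_sum]
    have h : ∑ y : Fin 2 → ZMod 2, (chainFun 0 y).val = 1 := by decide
    rw [h]
    norm_num
  | succ m ih =>
    rw [chainFun, weight_prependCanalizing, ih]
    ring

lemma avgSens_chainFun (m : ℕ) :
    avgSens (chainFun m) = 4 / 3 - (3 + (-1 : ℚ) ^ m) / (3 * 2 ^ (m + 2)) := by
  induction m with
  | zero =>
    have h : ∀ i : Fin 2, ∑ x : Fin 2 → ZMod 2,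
        (chainFun 0 (Function.update x i (x i + 1)) + chainFun 0 x).val = 2 := by decide
    simp only [avgSens, activity, ← Nat.cast_sum, h]
    norm_num
  | succ m ih =>
    rw [chainFun, avgSens_prependCanalizing, ih, weight_chainFun]
    field_simp
    ring

lemma nestVal_eq_chainFun (m : ℕ) : ∀ (i : ℕ) (M : ℕ → ZMod 2) (y : Fin (m + 2) → ZMod 2),
    (∀ t (ht : t < m), M (i + t) = y ⟨t, by omega⟩) →
    M (i + m) = y ⟨m, by omega⟩ * y ⟨m + 1, by omega⟩ →
    nestVal M (m + 1) i = chainFun m y := by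
  induction m with
  | zero =>
    intro i M y _ hlast
    exact hlast
  | succ m ih =>
    intro i M y hM hlast
    have hhead : M i = y 0 := hM 0 (by omega)
    have htail : nestVal M (m + 1) (i + 1) = chainFun m (Fin.tail y) := by
      refine ih (i + 1) M (Fin.tail y) (fun t ht => ?_) ?_
      · rw [add_right_comm, add_assoc]
        exact hM (t + 1) (by omega)
      · rw [add_right_comm, add_assoc]
        exact hlast
    change M i * (nestVal M (m + 1) (i + 1) + 1) = y 0 * (chainFun m (Fin.tail y) + 1)
    rw [hhead, htail]

lemma Equiv.Perm.exists_comp_eq_of_card_fiber {α β : Type*} [Fintype α] [DecidableEq β]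
    (f g : α → β) (h : ∀ b, #{a | f a = b} = #{a | g a = b}) :
    ∃ e : Equiv.Perm α, ∀ a, f (e a) = g a :=
  ⟨Equiv.ofFiberEquiv fun b => Fintype.equivOfCardEq <| by
    rw [Fintype.card_subtype, Fintype.card_subtype, h], Equiv.ofFiberEquiv_map _⟩

lemma layerMon_eq_prod_perm {n r : ℕ} (L : Fin n → Fin r) (a : Fin n → ZMod 2) (i : ℕ)
    (x : Fin n → ZMod 2) (e : Equiv.Perm (Fin n)) :
    layerMon L a i x = ∏ p ∈ univ.filter (fun p => (L (e p) : ℕ) = i), ((x + a) ∘ e) p := by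
  rw [layerMon, Finset.prod_filter, Finset.prod_filter]
  exact (Equiv.prod_comp e fun j => if (L j : ℕ) = i then x j + a j else 1).symm

def chainLayer (m : ℕ) : Fin (m + 2) → Fin (m + 1) :=
  fun p => ⟨min p m, by omega⟩

lemma filter_chainLayer_of_lt {m t : ℕ} (ht : t < m) :
    univ.filter (fun p => (chainLayer m p : ℕ) = t) = {⟨t, by omega⟩} := by
  ext p
  simp only [mem_filter, mem_univ, true_and, mem_singleton, Fin.ext_iff]
  simp only [chainLayer]
  omega

lemma filter_chainLayer_self (m : ℕ) :
    univ.filter (fun p => (chainLayer m p : ℕ) = m) = {⟨m, by omega⟩, ⟨m + 1, by omega⟩} := by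
  ext p
  simp only [mem_filter, mem_univ, true_and, mem_insert, mem_singleton, Fin.ext_iff]
  simp only [chainLayer]
  omega

lemma card_filter_chainLayer {m t : ℕ} (ht : t ≤ m) :
    #{p | (chainLayer m p : ℕ) = t} = if t = m then 2 else 1 := by
  split_ifs with htm
  · subst htm
    rw [filter_chainLayer_self, card_pair (by simp [Fin.ext_iff])]
  · rw [filter_chainLayer_of_lt (by omega), card_singleton]

lemma nestVal_layerMon_eq_chainFun {m : ℕ} (L : Fin (m + 2) → Fin (m + 1))
    (a x : Fin (m + 2) → ZMod 2) (e : Equiv.Perm (Fin (m + 2)))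
    (he : ∀ p, (L (e p) : ℕ) = chainLayer m p) :
    nestVal (fun i => layerMon L a i x) (m + 1) 0 = chainFun m ((x + a) ∘ e) := by
  apply nestVal_eq_chainFun
  · intro t ht
    rw [layerMon_eq_prod_perm L a _ x e]
    simp only [he, zero_add, filter_chainLayer_of_lt ht, prod_singleton]
  · have hne : (⟨m, by omega⟩ : Fin (m + 2)) ≠ ⟨m + 1, by omega⟩ := by simp [Fin.ext_iff]
    rw [layerMon_eq_prod_perm L a _ x e]
    simp only [he, zero_add, filter_chainLayer_self, prod_pair hne]

theorem statement17_general {n : ℕ} (f : (Fin n → ZMod 2) → ZMod 2)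
    (L : Fin n → Fin (n - 1)) (a : Fin n → ZMod 2) (b : ZMod 2)
    (h : IsLayeredForm f L a b)
    (hsize : ∀ l : Fin (n - 1),
      layerSize L (l : ℕ) = if (l : ℕ) = n - 2 then 2 else 1) :
    avgSens f = 4 / 3 - (3 + (-1 : ℚ) ^ n) / (3 * 2 ^ n) := by
  obtain ⟨hr, -, -, hform⟩ := h
  obtain ⟨m, rfl⟩ : ∃ m, n = m + 2 := ⟨n - 2, by omega⟩
  obtain ⟨e, he⟩ := Equiv.Perm.exists_comp_eq_of_card_fiber L (chainLayer m) fun l => by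
    have hl := hsize l
    simp only [layerSize, show m + 2 - 2 = m from rfl] at hl
    simp only [Fin.ext_iff, hl, card_filter_chainLayer (Nat.lt_succ_iff.mp l.isLt)]
  have hf : f = fun x => chainFun m ((x + a) ∘ e) + b := by
    funext x
    rw [hform x]
    exact congrArg (· + b) (nestVal_layerMon_eq_chainFun L a x e fun p => congrArg Fin.val (he p))
  rw [hf, avgSens_add_const, avgSens_comp_add (fun y => chainFun m (y ∘ e)), avgSens_comp_perm,
    avgSens_chainFun]
  ring

/-- For `n ≥ 3`, a nested canalizing function whose layered form has layer
number `r = n−1` with layer sizes `k₁ = ⋯ = k_{n−2} = 1`, `k_{n−1} = 2` has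
average sensitivity `sᶠ = 4/3 − (3 + (−1)ⁿ)/(3·2ⁿ)`. -/
theorem statement17 {n : ℕ} (hn : 3 ≤ n) (f : (Fin n → ZMod 2) → ZMod 2)
    (L : Fin n → Fin (n - 1)) (a : Fin n → ZMod 2) (b : ZMod 2)
    (h : IsLayeredForm f L a b)
    (hsize : ∀ l : Fin (n - 1),
      layerSize L (l : ℕ) = if (l : ℕ) = n - 2 then 2 else 1) :
    avgSens f = 4 / 3 - (3 + (-1 : ℚ) ^ n) / (3 * 2 ^ n) :=
  statement17_general f L a b h hsize
end
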